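/- arXiv:1710.07398 — 3 statements merged into one kernel-verified Lean document; each statement's English description precedes it below -/
import Mathlib

section
/- Let (R, m) be a commutative Noetherian local ring and let I, J be ideals with J ⊆ I and mI = mJ. Then μ(I) = μ(J) + length_R(I/J), where μ denotes the minimal number of generators. -/
open IsLocalRing CategoryTheory

universe u

noncomputable section

/-- The minimal number of generators of an ideal. -/
def muGen {R : Type u} [CommRing R] (I : Ideal R) : ℕ :=
  sInf {n | ∃ s : Finset R, s.card = n ∧ Ideal.span (s : Set R) = I}

/-- `depth_R(M) ≥ n` : there is a regular sequence on `M` of length `n`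
consisting of elements of the maximal ideal. -/
def depthGE (R : Type u) [CommRing R] [IsLocalRing R]
    (M : Type u) [AddCommGroup M] [Module R M] (n : ℕ) : Prop :=
  ∃ rs : List R, rs.length = n ∧ (∀ r ∈ rs, r ∈ maximalIdeal R) ∧
    RingTheory.Sequence.IsWeaklyRegular M rs

/-- A Noetherian local ring is Cohen-Macaulay if it admits a regular sequence in the
maximal ideal whose length equals the Krull dimension. -/
def IsCMLocalRing (R : Type u) [CommRing R] [IsLocalRing R] : Prop :=
  ∃ rs : List R, (rs.length : WithBot ℕ∞) = ringKrullDim R ∧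
    (∀ r ∈ rs, r ∈ maximalIdeal R) ∧ RingTheory.Sequence.IsWeaklyRegular R rs

/-- A parameter ideal: generated by `dim R` elements, with radical the maximal ideal. -/
def IsParameterIdeal (R : Type u) [CommRing R] [IsLocalRing R] (q : Ideal R) : Prop :=
  ∃ s : Finset R, Ideal.span (s : Set R) = q ∧ (s.card : WithBot ℕ∞) = ringKrullDim R ∧
    q.radical = maximalIdeal R

/-- `I` is `m`-full: `mI : x = I` for some `x ∈ m`. -/
def IsMFull (R : Type u) [CommRing R] [IsLocalRing R] (I : Ideal R) : Prop :=
  ∃ x ∈ maximalIdeal R, (maximalIdeal R * I).colon (Ideal.span {x}) = I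

/-- `I` is weakly `m`-full: `mI : m = I`. -/
def IsWeaklyMFull (R : Type u) [CommRing R] [IsLocalRing R] (I : Ideal R) : Prop :=
  (maximalIdeal R * I).colon (maximalIdeal R) = I

/-- Projective dimension at most `n`, via syzygies. -/
def pdLE (R : Type u) [CommRing R] : ℕ → (M : Type u) → [AddCommGroup M] → [Module R M] → Prop
  | 0, M, _, _ => Module.Projective R M
  | n+1, M, _, _ => ∃ (k : ℕ) (f : (Fin k → R) →ₗ[R] M),
      Function.Surjective f ∧ pdLE R n (LinearMap.ker f)

/-- Projective dimension (strictly) less than `t` (the zero module has `pd = -∞`). -/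
def pdLT (R : Type u) [CommRing R] (t : ℕ) (M : Type u) [AddCommGroup M] [Module R M] : Prop :=
  Subsingleton M ∨ ∃ n, n < t ∧ pdLE R n M

/-- Finite projective dimension. -/
def pdFinite (R : Type u) [CommRing R] (M : Type u) [AddCommGroup M] [Module R M] : Prop :=
  ∃ n, pdLE R n M

/-- Vanishing of `Tor_i^R(M, N)`. -/
abbrev TorZero (R : Type u) [CommRing R] (M N : Type u) [AddCommGroup M] [Module R M]
    [AddCommGroup N] [Module R N] (i : ℕ) : Prop :=
  Subsingleton (((Tor (ModuleCat.{u} R) i).obj (ModuleCat.of R M)).obj (ModuleCat.of R N))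

/-- An ideal is integrally closed if it contains every element of `R` integral over it. -/
def IsIntegrallyClosedIdeal {R : Type u} [CommRing R] (I : Ideal R) : Prop :=
  ∀ x : R, (∃ f : Polynomial R, f.Monic ∧ 0 < f.natDegree ∧
    (∀ i < f.natDegree, f.coeff i ∈ I ^ (f.natDegree - i)) ∧ Polynomial.eval x f = 0) → x ∈ I

/-- Serre's condition `(S_n)`: `depth R_p ≥ min(n, dim R_p)` for all primes `p`. -/
def SerreCondS (R : Type u) [CommRing R] (n : ℕ) : Prop :=
  ∀ (p : Ideal R) [p.IsPrime], ∀ m : ℕ, m ≤ n →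
    (m : WithBot ℕ∞) ≤ ringKrullDim (Localization.AtPrime p) →
    depthGE (Localization.AtPrime p) (Localization.AtPrime p) m

/-- `[I] ∈ Pic R`: `I` is a finitely generated projective module, locally free of rank one. -/
def InPicard (R : Type u) [CommRing R] (I : Ideal R) : Prop :=
  Module.Finite R I ∧ Module.Projective R I ∧
  ∀ (p : Ideal R) [p.IsPrime],
    Nonempty (LocalizedModule p.primeCompl I ≃ₗ[Localization.AtPrime p] Localization.AtPrime p)

/-- The `n`-th symbolic power `p^(n) = p^n R_p ∩ R` of a prime `p`. -/
def symbolicPow {R : Type u} [CommRing R] (p : Ideal R) (hp : p.IsPrime) (n : ℕ) : Ideal R :=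
  letI := hp
  (Ideal.map (algebraMap R (Localization.AtPrime p)) (p ^ n)).comap
    (algebraMap R (Localization.AtPrime p))

/-- The module `Ext_R^i(k, M)` where `k` is the residue field. -/
def ExtResMod (R : Type u) [CommRing R] [IsLocalRing R]
    (i : ℕ) (M : Type u) [AddCommGroup M] [Module R M] : ModuleCat.{u} R :=
  ((Ext R (ModuleCat.{u} R) i).obj (Opposite.op (ModuleCat.of R (ResidueField R)))).obj
    (ModuleCat.of R M)

/-- `ω` is a canonical module of the `d`-dimensional local ring `R`:
`Ext^i(k, ω) = 0` for `i ≠ d` and `Ext^d(k, ω) ≅ k`. -/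
def IsCanonicalModule (R : Type u) [CommRing R] [IsLocalRing R] (d : ℕ)
    (ω : Type u) [AddCommGroup ω] [Module R ω] : Prop :=
  Module.Finite R ω ∧ (∀ i : ℕ, i ≠ d → Subsingleton (ExtResMod R i ω)) ∧
    Nonempty ((ExtResMod R d ω) ≃ₗ[R] ResidueField R)

/-- A maximal Cohen-Macaulay module: finitely generated, admitting a regular sequence
in the maximal ideal of length `dim R`. -/
def IsMCM (R : Type u) [CommRing R] [IsLocalRing R]
    (N : Type u) [AddCommGroup N] [Module R N] : Prop :=
  Module.Finite R N ∧ ∃ rs : List R, (rs.length : WithBot ℕ∞) = ringKrullDim R ∧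
    (∀ r ∈ rs, r ∈ maximalIdeal R) ∧ RingTheory.Sequence.IsRegular N rs

/-- `R` has minimal multiplicity (with infinite residue field): there is a
parameter ideal `q` with `m² = qm`. -/
def HasMinimalMultiplicity (R : Type u) [CommRing R] [IsLocalRing R] : Prop :=
  ∃ q : Ideal R, IsParameterIdeal R q ∧ maximalIdeal R ^ 2 = q * maximalIdeal R

/-- `M` is an `n`-th syzygy of the module `X`. -/
def IsNthSyzygyOf (R : Type u) [CommRing R] :
    ℕ → (X : Type u) → [AddCommGroup X] → [Module R X] →
      (M : Type u) → [AddCommGroup M] → [Module R M] → Prop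
  | 0, X, _, _, M, _, _ => Nonempty (M ≃ₗ[R] X)
  | n+1, X, _, _, M, _, _ => ∃ (a : ℕ) (f : (Fin a → R) →ₗ[R] X),
      Function.Surjective f ∧ IsNthSyzygyOf R n (LinearMap.ker f) M

end

/-!
Length is additive along the chain `mI = mJ ⊆ J ⊆ I`, so `ℓ(I/mI) = ℓ(J/mJ) + ℓ(I/J)`;
by Nakayama, `ℓ(K/mK) = μ(K)` for every finitely generated `K`.
-/

theorem muGen_eq_spanFinrank {R : Type u} [CommRing R] (I : Ideal R) :
    muGen I = I.spanFinrank := by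
  rw [muGen, Submodule.spanFinrank_eq_iInf, iInf]
  congr 1
  ext n
  simp [Ideal.span, eq_comm, and_comm]

namespace Submodule

theorem length_quotient_add_length_quotient {R M : Type*} [Ring R] [AddCommGroup M] [Module R M]
    {N₁ N₂ N₃ : Submodule R M} (h₁₂ : N₁ ≤ N₂) (h₂₃ : N₂ ≤ N₃) :
    Module.length R (N₃ ⧸ N₁.comap N₃.subtype) =
      Module.length R (N₂ ⧸ N₁.comap N₂.subtype) +
        Module.length R (N₃ ⧸ N₂.comap N₃.subtype) := by
  have hcomap : N₁.comap N₂.subtype = (N₁.comap N₃.subtype).comap (inclusion h₂₃) := by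
    rw [← comap_comp, subtype_comp_inclusion]
  refine Module.length_eq_add_of_exact (mapQ _ _ (inclusion h₂₃) hcomap.le)
    (factor (comap_mono h₁₂)) ?_ (factor_surjective _) ?_
  · rw [← LinearMap.ker_eq_bot, ker_mapQ, ← hcomap, mkQ_map_self]
  · rw [LinearMap.exact_iff, factor, ker_mapQ, range_mapQ, comap_id, range_inclusion]

theorem smul_top_eq_comap_smul {R M : Type*} [CommRing R] [AddCommGroup M] [Module R M]
    (I : Ideal R) (N : Submodule R M) :
    I • (⊤ : Submodule R N) = (I • N).comap N.subtype := by
  ext x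
  exact mem_smul_top_iff I N x

end Submodule

namespace IsLocalRing

variable {R M : Type*} [CommRing R] [IsLocalRing R] [AddCommGroup M] [Module R M]

theorem spanFinrank_eq_length_quotient (N : Submodule R M) (hN : N.FG) :
    (N.spanFinrank : ℕ∞) = Module.length R (N ⧸ maximalIdeal R • (⊤ : Submodule R N)) := by
  let := Ideal.Quotient.field (maximalIdeal R)
  have : Module.Finite R N := Module.Finite.iff_fg.mpr hN
  have : Module.Finite (R ⧸ maximalIdeal R) (N ⧸ maximalIdeal R • (⊤ : Submodule R N)) :=
    Module.Finite.of_restrictScalars_finite R _ _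
  rw [spanFinrank_eq_finrank_quotient N hN, ← Module.length_eq_finrank,
    Module.length_eq_of_surjective (S := R) (Ideal.Quotient.mk_surjective (I := maximalIdeal R))]

theorem spanFinrank_eq_spanFinrank_add_length {I J : Submodule R M} (hI : I.FG) (hJ : J.FG)
    (hJI : J ≤ I) (h : maximalIdeal R • I = maximalIdeal R • J) :
    (I.spanFinrank : ℕ∞) = J.spanFinrank + Module.length R (I ⧸ J.comap I.subtype) := by
  rw [spanFinrank_eq_length_quotient I hI, spanFinrank_eq_length_quotient J hJ,
    Submodule.smul_top_eq_comap_smul, Submodule.smul_top_eq_comap_smul, h]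
  exact Submodule.length_quotient_add_length_quotient Submodule.smul_le_right hJI

end IsLocalRing

theorem Ideal.length_map_mk_eq_length_quotient {R : Type*} [CommRing R] (I J : Ideal R) :
    Module.length (R ⧸ J) (I.map (Ideal.Quotient.mk J)) =
      Module.length R (I ⧸ Submodule.comap I.subtype J) := by
  let ψ : I →ₗ[R] I.map (Ideal.Quotient.mk J) :=
    LinearMap.codRestrict ((I.map (Ideal.Quotient.mk J)).restrictScalars R) (J.mkQ ∘ₗ I.subtype)
      fun x => Ideal.mem_map_of_mem _ x.2
  have hψ : Function.Surjective ψ := by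
    rintro ⟨y, hy⟩
    obtain ⟨x, hx, rfl⟩ := (Ideal.mem_map_iff_of_surjective _ Ideal.Quotient.mk_surjective).mp hy
    exact ⟨⟨x, hx⟩, rfl⟩
  have hker : LinearMap.ker ψ = Submodule.comap I.subtype J := by
    ext x
    rw [LinearMap.mem_ker, ← Subtype.coe_inj]
    exact Ideal.Quotient.eq_zero_iff_mem
  rw [← Module.length_eq_of_surjective (M := I.map (Ideal.Quotient.mk J)) (S := R)
    Ideal.Quotient.mk_surjective, ← (ψ.quotKerEquivOfSurjective hψ).length_eq,
    (Submodule.quotEquivOfEq _ _ hker).length_eq]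

/-- if `J ⊆ I` and `mI = mJ`, then `μ(I) = μ(J) + length(I/J)`. -/
theorem stmt1 (R : Type u) [CommRing R] [IsNoetherianRing R] [IsLocalRing R]
    (I J : Ideal R) (hJI : J ≤ I)
    (h : maximalIdeal R * I = maximalIdeal R * J)
    (c : ℕ)
    (hc : Order.krullDim (Submodule (R ⧸ J) (Ideal.map (Ideal.Quotient.mk J) I))
      = (c : WithBot ℕ∞)) :
    muGen I = muGen J + c := by
  have hlength : Module.length R (I ⧸ Submodule.comap I.subtype J) = c := by
    rw [← Ideal.length_map_mk_eq_length_quotient, ← WithBot.coe_inj, Module.coe_length, hc]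
    rfl
  have key := IsLocalRing.spanFinrank_eq_spanFinrank_add_length
    (IsNoetherian.noetherian I) (IsNoetherian.noetherian J) hJI h
  rw [hlength] at key
  rw [muGen_eq_spanFinrank, muGen_eq_spanFinrank]
  exact_mod_cast key
end

section
/- Let (R, m) be a Noetherian local ring of positive depth and I an m-primary weakly m-full ideal. If I is principal, then R is a discrete valuation ring. -/
/-!
Write `I = (a)`. A power of a regular element of `m` lies in `(a)`, so `a` is a non-zerodivisor.
As `(a)` is proper and `m`-primary there is `z ∈ ((a) : m) \ (a)`, and weak `m`-fullness gives
`y ∈ m` with `zy ∉ m(a)`, i.e. `zy = ca` with `c` a unit. Cancelling `a` in `c·(zw) = (zy)·w`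
shows `m = (y)`, and `y` is a non-zerodivisor. By Krull's intersection theorem every nonzero
element is then `y ^ k` times a unit, so `R` is a domain with principal maximal ideal: a DVR.
-/

open IsLocalRing CategoryTheory

universe u

open scoped nonZeroDivisors

namespace Ideal

variable {R : Type*} [CommSemiring R]

lemma exists_notMem_forall_mul_mem_of_pow_le {I J : Ideal R} (hI : I ≠ ⊤) :
    ∀ {n : ℕ}, J ^ n ≤ I → ∃ z ∉ I, ∀ w ∈ J, z * w ∈ I
  | 0, h => absurd (top_le_iff.mp (by simpa using h)) hI
  | n + 1, h => by
    by_cases hn : J ^ n ≤ I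
    · exact exists_notMem_forall_mul_mem_of_pow_le hI hn
    · obtain ⟨z, hzJ, hzI⟩ := SetLike.not_le_iff_exists.mp hn
      exact ⟨z, hzI, fun w hw ↦ h (pow_succ J n ▸ mul_mem_mul hzJ hw)⟩

lemma mem_nonZeroDivisors_of_mem_radical_span_singleton {a r : R} (hr : r ∈ R⁰)
    (h : r ∈ (span {a}).radical) : a ∈ R⁰ := by
  obtain ⟨n, hn⟩ := h
  obtain ⟨c, hc⟩ := mem_span_singleton'.mp hn
  exact (mul_mem_nonZeroDivisors.mp (hc ▸ pow_mem hr n)).2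

end Ideal

namespace IsLocalRing

lemma exists_mem_maximalIdeal_mem_nonZeroDivisors_of_depthGE_one {R : Type u} [CommRing R]
    [IsLocalRing R] (h : depthGE R R 1) : ∃ r ∈ maximalIdeal R, r ∈ R⁰ := by
  obtain ⟨rs, hlen, hmem, hreg⟩ := h
  obtain ⟨r, rfl⟩ := List.length_eq_one_iff.mp hlen
  have hr : IsSMulRegular R r := (RingTheory.Sequence.isWeaklyRegular_singleton_iff R r).mp hreg
  refine ⟨r, hmem r (List.mem_singleton_self r),
    mem_nonZeroDivisors_iff_right.mpr fun x hx ↦ ?_⟩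
  exact hr (show r • x = r • 0 by rw [smul_eq_mul, mul_comm, hx, smul_zero])

lemma exists_maximalIdeal_eq_span_of_isWeaklyMFull {R : Type u} [CommRing R] [IsLocalRing R]
    {a z : R} (ha : a ∈ R⁰) (hwmf : IsWeaklyMFull R (Ideal.span {a}))
    (hz : z ∉ Ideal.span {a}) (hzm : ∀ w ∈ maximalIdeal R, z * w ∈ Ideal.span {a}) :
    ∃ y ∈ R⁰, maximalIdeal R = Ideal.span {y} := by
  obtain ⟨y, hy, hzy⟩ :
      ∃ y ∈ maximalIdeal R, z * y ∉ maximalIdeal R * Ideal.span {a} := by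
    by_contra! h
    exact hz (hwmf ▸ Submodule.mem_colon.mpr h)
  obtain ⟨c, hc⟩ := Ideal.mem_span_singleton'.mp (hzm y hy)
  have hcu : IsUnit c := by
    by_contra hcu
    exact hzy (hc ▸ Ideal.mul_mem_mul ((mem_maximalIdeal c).mpr hcu)
      (Ideal.mem_span_singleton_self a))
  refine ⟨y, (mul_mem_nonZeroDivisors.mp (hc ▸ mul_mem hcu.mem_nonZeroDivisors ha)).2, ?_⟩
  refine le_antisymm (fun w hw ↦ ?_) (Ideal.span_singleton_le_iff_mem _ |>.mpr hy)
  obtain ⟨d, hd⟩ := Ideal.mem_span_singleton'.mp (hzm w hw)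
  have hcw : c * w = d * y :=
    sub_eq_zero.mp (mem_nonZeroDivisors_iff_right.mp ha _ (by linear_combination w * hc - y * hd))
  exact (Ideal.unit_mul_mem_iff_mem _ hcu).mp
    (hcw ▸ Ideal.mul_mem_left _ d (Ideal.mem_span_singleton_self y))

variable {R : Type*} [CommRing R] [IsNoetherianRing R] [IsLocalRing R]

lemma isDomain_of_maximalIdeal_eq_span {t : R} (ht : t ∈ R⁰)
    (hm : maximalIdeal R = Ideal.span {t}) : IsDomain R := by
  have hfin : ∀ x : R, x ≠ 0 → FiniteMultiplicity t x := by
    intro x hx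
    by_contra! h
    refine hx ((Submodule.mem_bot R).mp ?_)
    rw [← Ideal.iInf_pow_eq_bot_of_isLocalRing _ (maximalIdeal.isMaximal R).ne_top,
      Submodule.mem_iInf]
    intro n
    rw [hm, Ideal.span_singleton_pow, Ideal.mem_span_singleton]
    exact (pow_dvd_pow t n.le_succ).trans (h n)
  have : NoZeroDivisors R := noZeroDivisors_iff_forall_mem_nonZeroDivisors.mpr fun x hx ↦ by
    obtain ⟨c, hxc, hc⟩ := (hfin x hx).exists_eq_pow_mul_and_not_dvd
    have hcu : IsUnit c := by
      by_contra hcu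
      exact hc (Ideal.mem_span_singleton.mp (hm ▸ (mem_maximalIdeal c).mpr hcu))
    exact hxc ▸ mul_mem (pow_mem ht _) hcu.mem_nonZeroDivisors
  exact NoZeroDivisors.to_isDomain R

lemma isDiscreteValuationRing_of_maximalIdeal_eq_span [IsDomain R] {t : R} (ht : t ≠ 0)
    (hm : maximalIdeal R = Ideal.span {t}) : IsDiscreteValuationRing R := by
  have hnf : ¬IsField R := fun hR ↦
    ht (Ideal.span_singleton_eq_bot.mp (hm ▸ (isField_iff_maximalIdeal_eq.mp hR)))
  have hprin : (maximalIdeal R).IsPrincipal := ⟨t, hm⟩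
  exact ((IsDiscreteValuationRing.TFAE R hnf).out 4 0).mp hprin

end IsLocalRing

/-- if `R` is a local ring of positive depth and `I` is an
`m`-primary weakly `m`-full principal ideal, then `R` is a DVR. -/
theorem stmt9 (R : Type u) [CommRing R] [IsNoetherianRing R] [IsLocalRing R]
    (hdepth : depthGE R R 1)
    (I : Ideal R) (hprim : I.radical = maximalIdeal R) (hwmf : IsWeaklyMFull R I)
    (hprin : I.IsPrincipal) :
    ∃ _ : IsDomain R, IsDiscreteValuationRing R := by
  obtain ⟨a, rfl⟩ : ∃ a, I = Ideal.span {a} := hprin.principal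
  obtain ⟨r, hrm, hr⟩ := exists_mem_maximalIdeal_mem_nonZeroDivisors_of_depthGE_one hdepth
  have ha : a ∈ R⁰ := Ideal.mem_nonZeroDivisors_of_mem_radical_span_singleton hr (hprim ▸ hrm)
  have hne_top : Ideal.span {a} ≠ ⊤ := fun h ↦
    (maximalIdeal.isMaximal R).ne_top (hprim ▸ Ideal.radical_eq_top.mpr h)
  obtain ⟨N, hN⟩ := Ideal.exists_pow_le_of_le_radical_of_fg hprim.ge (IsNoetherian.noetherian _)
  obtain ⟨z, hz, hzm⟩ := Ideal.exists_notMem_forall_mul_mem_of_pow_le hne_top hN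
  obtain ⟨t, ht, hm⟩ := exists_maximalIdeal_eq_span_of_isWeaklyMFull ha hwmf hz hzm
  have : IsDomain R := isDomain_of_maximalIdeal_eq_span ht hm
  exact ⟨this, isDiscreteValuationRing_of_maximalIdeal_eq_span (nonZeroDivisors.ne_zero ht) hm⟩
end

section
/- Let R be a Noetherian ring satisfying (S2) and I an integrally closed ideal of positive height with [I] ∈ Pic R. Then I admits a primary decomposition of the form I = ∩_{p ∈ Ass(R/I)} p^{(n(p))}, where each n(p) is a positive integer and p^{(n)} denotes the n-th symbolic power of p. -/
open IsLocalRing CategoryTheory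

universe u

/-!
Let `p = (I : y)` be an associated prime of `R ⧸ I` and `m` the maximal ideal of `R_p`.
Since `[I] ∈ Pic R`, `I R_p = (x)` for a nonzerodivisor `x`; since `I` has positive height,
`p` is not minimal, so `(S₂)` gives a nonzerodivisor in `m`, i.e. `m` is a faithful module.
Now `m y ⊆ (x)`. If `m y ⊆ x m`, the determinant trick makes `y` integral over `(x) = I R_p`;
clearing denominators makes `s y` integral over `I` for some `s ∉ p`, so `s y ∈ I`,
contradicting `p = (I : y)`. Otherwise `a y = u x` with `a ∈ m` and `u` a unit, which forces
`m = (a)`, and Krull's intersection theorem gives `(x) = mⁿ` with `n > 0`. Hence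
`I R_p ∩ R = p⁽ⁿ⁾`, and `I` is the intersection of its contractions `I R_p ∩ R` over its
associated primes `p`.
-/
open Polynomial
open scoped nonZeroDivisors

section IntegralOverIdeal

variable {A : Type*} [CommRing A]

/-- The integral dependence relation in `IsIntegrallyClosedIdeal`, which thus reads
`∀ y, IsIntegralOverIdeal I y → y ∈ I`. -/
def IsIntegralOverIdeal (J : Ideal A) (y : A) : Prop :=
  ∃ f : A[X], f.Monic ∧ 0 < f.natDegree ∧
    (∀ i < f.natDegree, f.coeff i ∈ J ^ (f.natDegree - i)) ∧ f.eval y = 0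

theorem isIntegralOverIdeal_mul_of_mul_eval_eq_zero {J : Ideal A} {f : A[X]} (hf : f.Monic)
    (hdeg : 0 < f.natDegree) (hcoeff : ∀ i < f.natDegree, f.coeff i ∈ J ^ (f.natDegree - i))
    {s y : A} (h : s * f.eval y = 0) : IsIntegralOverIdeal J (s * y) := by
  refine ⟨f.scaleRoots s, (monic_scaleRoots_iff s).2 hf, by rwa [natDegree_scaleRoots],
    fun i hi => ?_, ?_⟩
  · rw [natDegree_scaleRoots] at hi ⊢
    rw [coeff_scaleRoots]
    exact Ideal.mul_mem_right _ _ (hcoeff i hi)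
  · rw [scaleRoots_eval_mul, ← Nat.sub_add_cancel hdeg, pow_succ, mul_assoc, h, mul_zero]

theorem isIntegralOverIdeal_of_forall_mul_mem [Nontrivial A] {J N : Ideal A} (hN : N.FG)
    {t : A} (htN : t ∈ N) (ht : t ∈ A⁰) {y : A} (hy : ∀ a ∈ N, y * a ∈ J * N) :
    IsIntegralOverIdeal J y := by
  have : Module.Finite A N := Module.Finite.iff_fg.2 hN
  obtain ⟨f, hf, -, hcoeff, hfy⟩ :=
    LinearMap.exists_monic_and_natDegree_eq_and_coeff_mem_pow_and_aeval_eq_zero A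
      (algebraMap A (Module.End A N) y) J (by
        rintro _ ⟨a, rfl⟩
        rw [Submodule.mem_smul_top_iff]
        exact hy a a.2)
  have hfy0 : f.eval y = 0 := by
    refine mem_nonZeroDivisors_iff_right.1 ht _ ?_
    have := congrArg Subtype.val (LinearMap.congr_fun hfy ⟨t, htN⟩)
    rwa [aeval_algebraMap_apply, Module.algebraMap_end_apply, coe_aeval_eq_eval] at this
  refine ⟨f, hf, hf.natDegree_pos.2 ?_, fun i _ => hcoeff i, hfy0⟩
  rintro rfl
  simp at hfy0

end IntegralOverIdeal

namespace IsLocalization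

variable {R L : Type*} [CommRing R] [CommRing L] [Algebra R L] (M : Submonoid R)
  [IsLocalization M L]

theorem exists_mul_mem_of_forall_mem_map {ι : Type*} (s : Finset ι) (J : ι → Ideal R)
    (z : ι → L) (hz : ∀ i ∈ s, z i ∈ (J i).map (algebraMap R L)) :
    ∃ d ∈ M, ∀ i ∈ s, ∃ a ∈ J i, algebraMap R L d * z i = algebraMap R L a := by
  classical
  induction s using Finset.induction_on with
  | empty => exact ⟨1, M.one_mem, by simp⟩
  | insert j s _ ih =>
    obtain ⟨d, hd, hds⟩ := ih fun i hi => hz i (Finset.mem_insert_of_mem hi)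
    obtain ⟨⟨⟨a, ha⟩, e⟩, hae⟩ :=
      (mem_map_algebraMap_iff M L).1 (hz j (Finset.mem_insert_self j s))
    refine ⟨e * d, M.mul_mem e.2 hd, fun i hi => ?_⟩
    rcases Finset.mem_insert.1 hi with rfl | hi
    · exact ⟨a * d, Ideal.mul_mem_right _ _ ha, by rw [map_mul, map_mul, ← hae]; ring⟩
    · obtain ⟨b, hb, hdb⟩ := hds i hi
      exact ⟨e * b, Ideal.mul_mem_left _ _ hb, by rw [map_mul, map_mul, ← hdb]; ring⟩

end IsLocalization

theorem Polynomial.exists_monic_map_eq_of_coeff_eq {R S : Type*} [CommRing R] [CommRing S]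
    (φ : R →+* S) {p : S[X]} (hp : p.Monic) (g : ℕ → R)
    (hg : ∀ i < p.natDegree, φ (g i) = p.coeff i) :
    ∃ q : R[X], q.Monic ∧ q.map φ = p ∧ ∀ i < p.natDegree, q.coeff i = g i := by
  refine ⟨X ^ p.natDegree + ∑ i ∈ Finset.range p.natDegree, C (g i) * X ^ i,
    monic_X_pow_add (by simp_rw [← Fin.sum_univ_eq_sum_range, degree_sum_fin_lt]), ?_,
    fun i hi => ?_⟩
  · conv_rhs => rw [hp.as_sum]
    simp only [Polynomial.map_add, Polynomial.map_sum, Polynomial.map_mul, Polynomial.map_pow,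
      map_X, map_C]
    congr 1
    exact Finset.sum_congr rfl fun i hi => by rw [hg i (Finset.mem_range.1 hi)]
  · simp [coeff_X_pow, hi.ne, hi]

theorem IsIntegralOverIdeal.exists_mul_of_isLocalization {R L : Type*} [CommRing R] [CommRing L]
    [Algebra R L] (M : Submonoid R) [IsLocalization M L] {I : Ideal R} {y : R}
    (h : IsIntegralOverIdeal (I.map (algebraMap R L)) (algebraMap R L y)) :
    ∃ s ∈ M, IsIntegralOverIdeal I (s * y) := by
  obtain ⟨f, hf, hdeg, hcoeff, hfy⟩ := h
  set n := f.natDegree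
  have : Nontrivial L := by
    rcases subsingleton_or_nontrivial L with _ | h
    · simp [n, Subsingleton.elim f 0] at hdeg
    · exact h
  obtain ⟨d, hd, hda⟩ := IsLocalization.exists_mul_mem_of_forall_mem_map M (Finset.range n)
    (fun i => I ^ (n - i)) f.coeff fun i hi => by
      rw [Ideal.map_pow]; exact hcoeff i (Finset.mem_range.1 hi)
  choose! a ha had using hda
  -- after scaling the root by `d`, all coefficients of `f` come from `R`
  obtain ⟨q, hq, hqf, hqcoeff⟩ := Polynomial.exists_monic_map_eq_of_coeff_eq (algebraMap R L)
    ((monic_scaleRoots_iff _).2 hf) (fun i => a i * d ^ (n - 1 - i)) fun i hi => by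
      rw [natDegree_scaleRoots] at hi
      rw [coeff_scaleRoots, map_mul, map_pow, ← had i (Finset.mem_range.2 hi),
        show n - i = n - 1 - i + 1 by omega, pow_succ]
      ring
  have hqdeg : q.natDegree = n := by
    rw [← hq.natDegree_map (algebraMap R L), hqf, natDegree_scaleRoots]
  have hq0 : algebraMap R L (q.eval (d * y)) = 0 := by
    rw [← eval₂_at_apply, ← Polynomial.eval_map, hqf, map_mul, scaleRoots_eval_mul, hfy,
      mul_zero]
  obtain ⟨v, hv⟩ := (IsLocalization.map_eq_zero_iff M L _).1 hq0
  refine ⟨v * d, M.mul_mem v.2 hd, ?_⟩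
  rw [mul_assoc]
  refine isIntegralOverIdeal_mul_of_mul_eval_eq_zero hq (hqdeg ▸ hdeg) (fun i hi => ?_) hv
  rw [hqdeg] at hi ⊢
  rw [hqcoeff i (by rwa [natDegree_scaleRoots])]
  exact Ideal.mul_mem_right _ _ (ha i (Finset.mem_range.2 hi))

namespace IsLocalRing

variable {A : Type*} [CommRing A] [IsLocalRing A]

theorem exists_maximalIdeal_eq_span_or_forall_mul_mem {x y : A} (hx : x ∈ A⁰)
    (hy : ∀ a ∈ maximalIdeal A, a * y ∈ Ideal.span {x}) :
    (∃ a, maximalIdeal A = Ideal.span {a}) ∨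
      ∀ a ∈ maximalIdeal A, y * a ∈ Ideal.span {x} * maximalIdeal A := by
  by_contra! h
  obtain ⟨hnp, a, ha, hya⟩ := h
  obtain ⟨c, hc⟩ := Ideal.mem_span_singleton'.1 (hy a ha)
  have hcu : IsUnit c := by
    by_contra hcu
    refine hya ?_
    rw [mul_comm y, ← hc, mul_comm c]
    exact Ideal.mul_mem_mul (Ideal.mem_span_singleton_self x) ((mem_maximalIdeal c).2 hcu)
  refine hnp a (le_antisymm (fun b hb => ?_) (Ideal.span_le.2 (Set.singleton_subset_iff.2 ha)))
  obtain ⟨e, he⟩ := Ideal.mem_span_singleton'.1 (hy b hb)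
  have hbc : b * c = a * e := by
    rw [← mul_cancel_right_mem_nonZeroDivisors hx, mul_assoc, hc, mul_assoc, he]
    ring
  exact Ideal.mem_span_singleton.2 (hcu.dvd_mul_right.1 ⟨e, hbc⟩)

theorem exists_span_singleton_eq_maximalIdeal_pow [IsNoetherianRing A] {a : A}
    (ha : maximalIdeal A = Ideal.span {a}) {x : A} (hx : x ≠ 0) :
    ∃ n, Ideal.span {x} = maximalIdeal A ^ n := by
  classical
  have hex : ∃ n, x ∉ maximalIdeal A ^ (n + 1) := by
    by_contra! h
    have hx' : x ∈ ⨅ n, maximalIdeal A ^ n := by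
      refine Submodule.mem_iInf _ |>.2 fun n => ?_
      cases n with
      | zero => simp
      | succ n => exact h n
    rw [Ideal.iInf_pow_eq_bot_of_isLocalRing _ (maximalIdeal.isMaximal A).ne_top] at hx'
    exact hx hx'
  obtain ⟨n, hxn, hxn1⟩ :
      ∃ n, x ∈ maximalIdeal A ^ n ∧ x ∉ maximalIdeal A ^ (n + 1) := by
    refine ⟨Nat.find hex, ?_, Nat.find_spec hex⟩
    cases h : Nat.find hex with
    | zero => simp
    | succ k => exact not_not.1 (Nat.find_min hex (h ▸ k.lt_succ_self))
  rw [ha, Ideal.span_singleton_pow, Ideal.mem_span_singleton'] at hxn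
  obtain ⟨r, rfl⟩ := hxn
  have hr : IsUnit r := by
    by_contra hr
    have hra : a ∣ r := Ideal.mem_span_singleton.1 (ha ▸ (mem_maximalIdeal r).2 hr)
    refine hxn1 ?_
    rw [ha, Ideal.span_singleton_pow, Ideal.mem_span_singleton, pow_succ, mul_comm r]
    exact mul_dvd_mul_left _ hra
  exact ⟨n, by rw [ha, Ideal.span_singleton_pow, Ideal.span_singleton_mul_left_unit hr]⟩

theorem exists_span_singleton_eq_maximalIdeal_pow_of_not_isIntegralOverIdeal
    [IsNoetherianRing A] {x y t : A} (hx : x ∈ A⁰) (hxm : x ∈ maximalIdeal A)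
    (htm : t ∈ maximalIdeal A) (ht : t ∈ A⁰)
    (hmy : ∀ a ∈ maximalIdeal A, a * y ∈ Ideal.span {x})
    (hy : ¬ IsIntegralOverIdeal (Ideal.span {x}) y) :
    ∃ n, 0 < n ∧ Ideal.span {x} = maximalIdeal A ^ n := by
  obtain ⟨a, ha⟩ | hle := exists_maximalIdeal_eq_span_or_forall_mul_mem hx hmy
  · obtain ⟨n, hn⟩ := exists_span_singleton_eq_maximalIdeal_pow ha (nonZeroDivisors.ne_zero hx)
    refine ⟨n, Nat.pos_of_ne_zero fun h0 => ?_, hn⟩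
    rw [h0, pow_zero, Ideal.one_eq_top, Ideal.span_singleton_eq_top] at hn
    exact (mem_maximalIdeal x).1 hxm hn
  · exact absurd (isIntegralOverIdeal_of_forall_mul_mem (IsNoetherian.noetherian _) htm ht hle) hy

end IsLocalRing

theorem Ideal.exists_mem_nonZeroDivisors_eq_span_singleton {A : Type*} [CommRing A]
    {J : Ideal A} (e : J ≃ₗ[A] A) : ∃ x ∈ A⁰, J = Ideal.span {x} := by
  refine ⟨e.symm 1, mem_nonZeroDivisors_iff_right.2 fun r hr => ?_, le_antisymm ?_ ?_⟩
  · have : e.symm r = 0 := Subtype.ext (by rw [← mul_one r, ← smul_eq_mul, map_smul]; exact hr)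
    simpa using congrArg e this
  · intro z hz
    refine Ideal.mem_span_singleton'.2 ⟨e ⟨z, hz⟩, ?_⟩
    rw [← smul_eq_mul, ← Submodule.coe_smul, ← map_smul, smul_eq_mul, mul_one,
      LinearEquiv.symm_apply_apply]
  · exact Ideal.span_le.2 (Set.singleton_subset_iff.2 (e.symm 1).2)

theorem InPicard.exists_map_eq_span_singleton {R : Type u} [CommRing R] {I : Ideal R}
    (h : InPicard R I) (p : Ideal R) [p.IsPrime] :
    ∃ x ∈ (Localization.AtPrime p)⁰,
      I.map (algebraMap R (Localization.AtPrime p)) = Ideal.span {x} := by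
  obtain ⟨e⟩ := h.2.2 p
  exact Ideal.exists_mem_nonZeroDivisors_eq_span_singleton <|
    ((IsLocalizedModule.iso p.primeCompl (Algebra.idealMap (Localization.AtPrime p) I)
      ).extendScalarsOfIsLocalization p.primeCompl (Localization.AtPrime p)).symm.trans e

theorem SerreCondS.exists_mem_maximalIdeal_mem_nonZeroDivisors {R : Type u} [CommRing R]
    {n : ℕ} (h : SerreCondS R n) (hn : 1 ≤ n) (p : Ideal R) [p.IsPrime]
    (hp : p ∉ minimalPrimes R) :
    ∃ t ∈ maximalIdeal (Localization.AtPrime p), t ∈ (Localization.AtPrime p)⁰ := by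
  have hdim : (1 : WithBot ℕ∞) ≤ ringKrullDim (Localization.AtPrime p) := by
    rw [IsLocalization.AtPrime.ringKrullDim_eq_height p]
    exact_mod_cast Order.one_le_iff_ne_zero.2 (mt Ideal.height_eq_zero_iff.1 hp)
  obtain ⟨rs, hlen, hmem, hreg⟩ := h p 1 hn hdim
  obtain ⟨t, rfl⟩ := List.length_eq_one_iff.1 hlen
  refine ⟨t, hmem t (List.mem_singleton_self t), mem_nonZeroDivisors_iff_right.2 fun z hz => ?_⟩
  refine ((RingTheory.Sequence.isWeaklyRegular_cons_iff _ t []).1 hreg).1 ?_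
  simpa [mul_comm] using hz

section AssociatedPrimes

variable {R : Type*} [CommRing R] {I : Ideal R}

theorem mem_colon_singleton_quotient_mk_iff (u y : R) :
    u ∈ (⊥ : Submodule R (R ⧸ I)).colon {Ideal.Quotient.mk I y} ↔ u * y ∈ I := by
  rw [Submodule.mem_colon_singleton, Submodule.mem_bot, ← Ideal.Quotient.eq_zero_iff_mem,
    map_mul, Algebra.smul_def, Ideal.Quotient.algebraMap_eq]

theorem exists_forall_mem_iff_mul_mem_of_mem_associatedPrimes [IsNoetherianRing R] {p : Ideal R}
    (hp : p ∈ associatedPrimes R (R ⧸ I)) : ∃ y : R, ∀ u, u ∈ p ↔ u * y ∈ I := by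
  obtain ⟨-, y, hy⟩ := isAssociatedPrime_iff.1 hp
  obtain ⟨y, rfl⟩ := Ideal.Quotient.mk_surjective y
  exact ⟨y, fun u => by rw [hy, mem_colon_singleton_quotient_mk_iff]⟩

theorem Ideal.mem_iff_forall_mem_associatedPrimes [IsNoetherianRing R] (z : R) :
    z ∈ I ↔ ∀ p ∈ associatedPrimes R (R ⧸ I), ∃ u ∉ p, u * z ∈ I := by
  refine ⟨fun hz p hp => ⟨1, hp.1.one_notMem, by rwa [one_mul]⟩, fun h => ?_⟩
  by_contra hz
  obtain ⟨p, hp, hle⟩ := exists_le_isAssociatedPrime_of_isNoetherianRing R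
    (Ideal.Quotient.mk I z) (by rwa [ne_eq, Ideal.Quotient.eq_zero_iff_mem])
  obtain ⟨u, hu, huz⟩ := h p hp
  exact hu (hle ((mem_colon_singleton_quotient_mk_iff u z).2 huz))

end AssociatedPrimes

theorem mem_symbolicPow_iff_of_map_eq {R : Type u} [CommRing R] {p : Ideal R} [hp : p.IsPrime]
    {I : Ideal R} {n : ℕ}
    (h : I.map (algebraMap R (Localization.AtPrime p)) = maximalIdeal (Localization.AtPrime p) ^ n)
    (z : R) : z ∈ symbolicPow p hp n ↔ ∃ u ∉ p, u * z ∈ I := by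
  rw [symbolicPow, Ideal.map_pow, Localization.AtPrime.map_eq_maximalIdeal, ← h, Ideal.mem_comap,
    IsLocalization.algebraMap_mem_map_algebraMap_iff p.primeCompl]
  rfl

theorem exists_map_eq_maximalIdeal_pow_of_mem_associatedPrimes {R : Type u} [CommRing R]
    [IsNoetherianRing R] {k : ℕ} (hS : SerreCondS R k) (hk : 1 ≤ k) {I : Ideal R}
    (hht : ∀ p ∈ minimalPrimes R, ¬ I ≤ p) (hic : IsIntegrallyClosedIdeal I)
    (hPic : InPicard R I) {p : Ideal R} [p.IsPrime] (hp : p ∈ associatedPrimes R (R ⧸ I)) :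
    ∃ n, 0 < n ∧ I.map (algebraMap R (Localization.AtPrime p)) =
      maximalIdeal (Localization.AtPrime p) ^ n := by
  obtain ⟨y, hy⟩ := exists_forall_mem_iff_mul_mem_of_mem_associatedPrimes hp
  have hIp : I ≤ p := fun i hi => (hy i).2 (I.mul_mem_right y hi)
  have hpy : p * Ideal.span {y} ≤ I := Ideal.mul_le.2 fun u hu v hv => by
    obtain ⟨c, rfl⟩ := Ideal.mem_span_singleton'.1 hv
    rw [mul_left_comm]
    exact I.mul_mem_left c ((hy u).1 hu)
  obtain ⟨x, hx, hIx⟩ := hPic.exists_map_eq_span_singleton p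
  obtain ⟨t, htm, ht⟩ :=
    hS.exists_mem_maximalIdeal_mem_nonZeroDivisors hk p fun hmin => hht p hmin hIp
  rw [hIx]
  refine IsLocalRing.exists_span_singleton_eq_maximalIdeal_pow_of_not_isIntegralOverIdeal hx
    ?_ htm ht (y := algebraMap R _ y) (fun a ha => ?_) ?_
  · rw [← Localization.AtPrime.map_eq_maximalIdeal]
    exact Ideal.map_mono hIp (hIx ▸ Ideal.mem_span_singleton_self x)
  · rw [← Localization.AtPrime.map_eq_maximalIdeal] at ha
    rw [← hIx]
    refine Ideal.map_mono hpy ?_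
    rw [Ideal.map_mul, Ideal.map_span, Set.image_singleton]
    exact Ideal.mul_mem_mul ha (Ideal.mem_span_singleton_self _)
  · rw [← hIx]
    intro hint
    obtain ⟨s, hs, hsy⟩ := hint.exists_mul_of_isLocalization p.primeCompl
    exact hs ((hy s).2 (hic _ hsy))

/-- over an `(S_2)` Noetherian ring, an integrally closed ideal of
positive height with `[I] ∈ Pic R` has a primary decomposition by symbolic powers
of its associated primes. -/
theorem stmt15 (R : Type u) [CommRing R] [IsNoetherianRing R]
    (hS2 : SerreCondS R 2)
    (I : Ideal R) (hht : ∀ p ∈ minimalPrimes R, ¬ I ≤ p)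
    (hic : IsIntegrallyClosedIdeal I)
    (hPic : InPicard R I) :
    ∃ n : Ideal R → ℕ, (∀ p ∈ associatedPrimes R (R ⧸ I), 0 < n p) ∧
      I = sInf { J : Ideal R | ∃ (p : Ideal R) (hp : p.IsPrime),
        p ∈ associatedPrimes R (R ⧸ I) ∧ J = symbolicPow p hp (n p) } := by
  have key : ∀ p (hp : p ∈ associatedPrimes R (R ⧸ I)), ∃ n, 0 < n ∧
      ∀ z, z ∈ symbolicPow p hp.1 n ↔ ∃ u ∉ p, u * z ∈ I := fun p hp => by
    have := hp.1
    obtain ⟨n, hn, h⟩ :=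
      exists_map_eq_maximalIdeal_pow_of_mem_associatedPrimes hS2 (by norm_num) hht hic hPic hp
    exact ⟨n, hn, mem_symbolicPow_iff_of_map_eq h⟩
  choose! n hn_pos hn_mem using key
  refine ⟨n, hn_pos, le_antisymm (le_sInf ?_) fun z hz => ?_⟩
  · rintro _ ⟨p, hp, hass, rfl⟩ z hz
    exact (hn_mem p hass z).2 ⟨1, hp.one_notMem, by rwa [one_mul]⟩
  · refine (I.mem_iff_forall_mem_associatedPrimes z).2 fun p hass => (hn_mem p hass z).1 ?_
    exact Submodule.mem_sInf.1 hz _ ⟨p, hass.1, hass, rfl⟩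
end
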